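/- arXiv:2210.03410 — 6 statements merged into one kernel-verified Lean document; each statement's English description precedes it below -/
import Mathlib

section
/- Let n and d be odd positive integers with d ≤ n, and let (G, f) be an approving configuration with parameters (n, d, h). Then 4·d·h ≥ (n+1)·(d+1) (the global support inequality). -/
open Finset
open scoped Classical

/-- The closed neighborhood `N[v] = {v} ∪ N(v)` of a vertex `v` in a simple graph `G`.
A `d`-regular graph with loops is modeled by a simple graph in which every
closed neighborhood has size `d`. -/
noncomputable def closedNbhd {n : ℕ} (G : SimpleGraph (Fin n)) (v : Fin n) : Finset (Fin n) :=
  Finset.univ.filter fun u => u = v ∨ G.Adj v u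

/-- A configuration with parameters `(n, d, h)`: a simple graph `G` on `n` vertices all
of whose closed neighborhoods have size `d` (i.e. a `d`-regular graph with loops),
together with an opinion function `f : V → {1, -1}` having exactly `h` happy vertices. -/
def IsConfig {n : ℕ} (d h : ℕ) (G : SimpleGraph (Fin n)) (f : Fin n → ℤ) : Prop :=
  (∀ v, (closedNbhd G v).card = d) ∧ (∀ v, f v = 1 ∨ f v = -1) ∧
  (Finset.univ.filter fun v => f v = 1).card = h

/-- The number of proponents: vertices `v` with `∑_{u ∈ N[v]} f u ≥ 1`. -/
noncomputable def numProponents {n : ℕ} (G : SimpleGraph (Fin n)) (f : Fin n → ℤ) : ℕ :=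
  (Finset.univ.filter fun v => 1 ≤ ∑ u ∈ closedNbhd G v, f u).card

/-- A configuration is approving if more than `n/2` of its vertices are proponents. -/
def IsApproving {n : ℕ} (G : SimpleGraph (Fin n)) (f : Fin n → ℤ) : Prop :=
  2 * numProponents G f > n

/-- `hmin n d`: the least `h` for which an approving configuration with parameters
`(n, d, h)` exists. -/
noncomputable def hmin (n d : ℕ) : ℕ :=
  sInf {h : ℕ | ∃ (G : SimpleGraph (Fin n)) (f : Fin n → ℤ), IsConfig d h G f ∧ IsApproving G f}

/-- `hmax n d`: the greatest `h ≤ n` for which a disapproving configuration with parameters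
`(n, d, h)` exists. -/
noncomputable def hmax (n d : ℕ) : ℕ :=
  sSup {h : ℕ | h ≤ n ∧
    ∃ (G : SimpleGraph (Fin n)) (f : Fin n → ℤ), IsConfig d h G f ∧ ¬ IsApproving G f}

/-- `hminN n`: the minimum of `hmin n d` over odd `d` with `1 ≤ d ≤ n`. -/
noncomputable def hminN (n : ℕ) : ℕ :=
  sInf {m : ℕ | ∃ d : ℕ, Odd d ∧ 1 ≤ d ∧ d ≤ n ∧ m = hmin n d}

/-- the global support inequality for approving configurations. -/
theorem stmt0 (n d h : ℕ) (hn : Odd n) (hd : Odd d) (hnpos : 0 < n) (hdpos : 0 < d)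
    (hdn : d ≤ n) (G : SimpleGraph (Fin n)) (f : Fin n → ℤ)
    (hcfg : IsConfig d h G f) (happ : IsApproving G f) :
    4 * d * h ≥ (n + 1) * (d + 1) := by
  classical
  obtain ⟨hreg, hpm, hcard⟩ := hcfg
  set S : Fin n → ℤ := fun v => ∑ u ∈ closedNbhd G v, f u with hS
  -- double counting: ∑ v, S v = d * ∑ v, f v
  have hswap : ∑ v, S v = (d : ℤ) * ∑ v, f v := by
    have : ∑ v, S v = ∑ v, ∑ u, if (u = v ∨ G.Adj v u) then f u else 0 := by
      simp [hS, closedNbhd, Finset.sum_filter]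
    rw [this, Finset.sum_comm]
    have : ∀ u : Fin n, (∑ v, if (u = v ∨ G.Adj v u) then f u else 0) = (d : ℤ) * f u := by
      intro u
      have h1 : (∑ v, if (u = v ∨ G.Adj v u) then f u else 0)
          = ∑ v ∈ closedNbhd G u, f u := by
        rw [closedNbhd, Finset.sum_filter]
        refine Finset.sum_congr rfl fun v _ => ?_
        congr 1
        simp [eq_comm, G.adj_comm]
      rw [h1, Finset.sum_const, hreg u]
      simp [mul_comm]
    rw [Finset.sum_congr rfl fun u _ => this u, ← Finset.mul_sum]
  -- sum of f
  have hle : h ≤ n := by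
    rw [← hcard]
    simpa using Finset.card_filter_le Finset.univ (fun v => f v = 1)
  have hsumf : ∑ v, f v = (h : ℤ) - ((n : ℤ) - h) := by
    rw [← Finset.sum_filter_add_sum_filter_not Finset.univ (fun v => f v = 1)]
    have e1 : ∑ v ∈ Finset.univ.filter (fun v => f v = 1), f v = (h : ℤ) := by
      rw [Finset.sum_congr rfl (fun v hv => (Finset.mem_filter.1 hv).2),
        Finset.sum_const, hcard]
      simp
    have e2 : ∑ v ∈ Finset.univ.filter (fun v => ¬ f v = 1), f v
        = -(((n : ℤ)) - h) := by
      have : ∀ v ∈ Finset.univ.filter (fun v => ¬ f v = 1), f v = -1 := by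
        intro v hv
        rcases hpm v with h1 | h1
        · exact absurd h1 (Finset.mem_filter.1 hv).2
        · exact h1
      rw [Finset.sum_congr rfl this, Finset.sum_const,
        Finset.filter_not, Finset.card_sdiff_of_subset (Finset.filter_subset _ _), hcard]
      simp only [Finset.card_univ, Fintype.card_fin, Finset.sum_const, nsmul_eq_mul, mul_neg_one]
      omega
    rw [e1, e2]; ring
  -- bounds on S v
  have hSlb : ∀ v, -(d : ℤ) ≤ S v := by
    intro v
    have : ∀ u ∈ closedNbhd G v, (-1 : ℤ) ≤ f u := by
      intro u _
      rcases hpm u with h1 | h1 <;> rw [h1] <;> norm_num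
    calc -(d : ℤ) = ∑ _u ∈ closedNbhd G v, (-1 : ℤ) := by
          rw [Finset.sum_const, hreg v]; simp
      _ ≤ S v := Finset.sum_le_sum this
  set P := Finset.univ.filter (fun v => 1 ≤ S v) with hP
  have hPcard : P.card = numProponents G f := rfl
  have hp2 : n < 2 * P.card := happ
  -- lower bound the total sum
  have hlow : (P.card : ℤ) - ((n : ℤ) - P.card) * d ≤ ∑ v, S v := by
    rw [← Finset.sum_filter_add_sum_filter_not Finset.univ (fun v => 1 ≤ S v)]
    have b1 : (P.card : ℤ) ≤ ∑ v ∈ P, S v := by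
      calc (P.card : ℤ) = ∑ _v ∈ P, (1 : ℤ) := by simp
        _ ≤ ∑ v ∈ P, S v :=
          Finset.sum_le_sum fun v hv => (Finset.mem_filter.1 hv).2
    have b2 : -(((n : ℤ) - P.card) * d)
        ≤ ∑ v ∈ Finset.univ.filter (fun v => ¬ 1 ≤ S v), S v := by
      have hcc : (Finset.univ.filter (fun v => ¬ 1 ≤ S v)).card = n - P.card := by
        rw [Finset.filter_not, Finset.card_sdiff_of_subset (Finset.filter_subset _ _)]
        simp [hP]
      calc -(((n : ℤ) - P.card) * d)
          = ∑ _v ∈ Finset.univ.filter (fun v => ¬ 1 ≤ S v), (-(d:ℤ)) := by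
            rw [Finset.sum_const, hcc]
            have : P.card ≤ n := by
              have := Finset.card_filter_le Finset.univ (fun v => 1 ≤ S v)
              simpa [hP] using this
            rw [nsmul_eq_mul, Nat.cast_sub this]
            ring
        _ ≤ _ := Finset.sum_le_sum fun v _ => hSlb v
    linarith
  -- combine
  have key : (P.card : ℤ) * (1 + d) ≤ 2 * d * h := by
    have := hswap
    rw [hsumf] at this
    nlinarith [hlow, this]
  have hp : (n : ℤ) + 1 ≤ 2 * P.card := by exact_mod_cast hp2
  have hd1 : (0 : ℤ) ≤ 1 + d := by positivity
  have : ((n : ℤ) + 1) * (d + 1) ≤ 4 * d * h := by nlinarith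
  exact_mod_cast this
end

section
/- Let n and d be odd positive integers with d ≤ n. Then hmin(n, d) ≥ ((d+1)/2) · max{ (n+1)/(2d), 1 }, i.e., every approving configuration with parameters (n, d, h) satisfies both 2h ≥ d+1 and 4dh ≥ (n+1)(d+1). -/
open Finset
open scoped Classical

/-!
A proponent `v` has at least `(d + 1) / 2` happy vertices in `N[v]`, whence `2h ≥ d + 1`.
Since `u ∈ N[v] ↔ v ∈ N[u]`, every vertex lies in exactly `d` closed neighbourhoods, so
`∑_v ∑_{u ∈ N[v]} f u = d (2h - n)`. Each inner sum is `≥ 1` at a proponent and `≥ -d` at an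
opponent, and there are more than `n / 2` proponents; this gives `4dh ≥ (n + 1)(d + 1)`.
For the bound on `hmin` one also needs an approving configuration to exist at all (otherwise
`sInf ∅ = 0`): take all vertices happy on the circulant graph with jumps `{-k, …, k}`, `d = 2k + 1`.
-/

open SimpleGraph

section ClosedNbhd

variable {n d : ℕ} {G : SimpleGraph (Fin n)}

lemma mem_closedNbhd {u v : Fin n} : u ∈ closedNbhd G v ↔ u = v ∨ G.Adj v u := by
  simp [closedNbhd]

lemma mem_closedNbhd_comm {u v : Fin n} : u ∈ closedNbhd G v ↔ v ∈ closedNbhd G u := by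
  simp only [mem_closedNbhd, eq_comm, G.adj_comm]

lemma sum_sum_closedNbhd (hreg : ∀ v, #(closedNbhd G v) = d) (g : Fin n → ℤ) :
    ∑ v, ∑ u ∈ closedNbhd G v, g u = d * ∑ u, g u := by
  rw [sum_comm' (t' := univ) (s' := closedNbhd G) fun v u => by simp [mem_closedNbhd_comm],
    mul_sum]
  simp [hreg]

lemma card_closedNbhd_circulantGraph [NeZero n] {s : Finset (Fin n)} (hs₀ : 0 ∈ s)
    (hs_neg : ∀ x ∈ s, -x ∈ s) (v : Fin n) :
    #(closedNbhd (circulantGraph (s : Set (Fin n))) v) = #s := by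
  suffices closedNbhd (circulantGraph (s : Set (Fin n))) v = s.map (Equiv.addRight v).toEmbedding by
    rw [this, card_map]
  ext u
  rw [mem_closedNbhd, mem_map_equiv, circulantGraph_adj]
  simp only [Equiv.coe_addRight, Equiv.addRight_symm, ← sub_eq_add_neg,
    mem_coe]
  constructor
  · rintro (rfl | ⟨-, h | h⟩)
    · simpa using hs₀
    · simpa using hs_neg _ h
    · exact h
  · intro h
    by_cases huv : u = v
    · exact .inl huv
    · exact .inr ⟨Ne.symm huv, .inr h⟩

lemma exists_forall_card_closedNbhd_eq (hd : Odd d) (hdn : d ≤ n) :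
    ∃ G : SimpleGraph (Fin n), ∀ v, #(closedNbhd G v) = d := by
  obtain ⟨k, rfl⟩ := hd
  have : NeZero n := ⟨by omega⟩
  let K : Fin n := ⟨k, by omega⟩
  let s : Finset (Fin n) :=
    ({x : Fin n | (x : ℕ) < 2 * k + 1} : Finset _).map (Equiv.subRight K).toEmbedding
  have hmem : ∀ x, x ∈ s ↔ ((x + K : Fin n) : ℕ) ≤ 2 * k := by
    intro x
    simp [s, mem_map_equiv]
  refine ⟨circulantGraph s, fun v => (card_closedNbhd_circulantGraph ?_ ?_ v).trans ?_⟩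
  · rw [hmem, zero_add]
    exact Nat.le_mul_of_pos_left k two_pos
  · intro x hx
    rw [hmem] at hx ⊢
    let K₂ : Fin n := ⟨2 * k, by omega⟩
    have hK₂ : K₂ = K + K := Fin.ext <| by
      simp only [Fin.val_add, K, K₂]
      rw [Nat.mod_eq_of_lt (by omega)]
      omega
    rw [show -x + K = K₂ - (x + K) by rw [hK₂]; abel, Fin.sub_val_of_le hx]
    exact Nat.sub_le _ _
  · rw [card_map, Fin.card_filter_val_lt]
    omega

end ClosedNbhd

lemma sum_eq_two_mul_card_filter_sub_card {ι : Type*} (s : Finset ι) {f : ι → ℤ}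
    (hf : ∀ i ∈ s, f i = 1 ∨ f i = -1) :
    ∑ i ∈ s, f i = 2 * #{i ∈ s | f i = 1} - #s :=
  calc ∑ i ∈ s, f i = ∑ i ∈ s, (2 * (if f i = 1 then 1 else 0) - 1) :=
        sum_congr rfl fun i hi => by rcases hf i hi with h | h <;> simp [h]
    _ = _ := by rw [sum_sub_distrib, ← mul_sum, sum_boole]; simp

lemma add_one_mul_card_filter_sub_mul_card_le_sum {ι : Type*} (s : Finset ι) (S : ι → ℤ) {d : ℤ}
    (hS : ∀ i ∈ s, -d ≤ S i) :
    (d + 1) * #{i ∈ s | 1 ≤ S i} - d * #s ≤ ∑ i ∈ s, S i :=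
  calc (d + 1) * #{i ∈ s | 1 ≤ S i} - d * #s
      = ∑ i ∈ s, ((d + 1) * (if 1 ≤ S i then 1 else 0) - d) := by
        rw [sum_sub_distrib, ← mul_sum, sum_boole]; simp [mul_comm]
    _ ≤ ∑ i ∈ s, S i := sum_le_sum fun i hi => by have := hS i hi; split_ifs <;> linarith

namespace IsConfig

variable {n d h : ℕ} {G : SimpleGraph (Fin n)} {f : Fin n → ℤ}

lemma sum_closedNbhd_eq (cfg : IsConfig d h G f) (v : Fin n) :
    ∑ u ∈ closedNbhd G v, f u = 2 * #{u ∈ closedNbhd G v | f u = 1} - d := by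
  rw [sum_eq_two_mul_card_filter_sub_card _ fun u _ => cfg.2.1 u, cfg.1 v]

lemma add_one_le_two_mul_of_proponent (cfg : IsConfig d h G f) {v : Fin n}
    (hv : 1 ≤ ∑ u ∈ closedNbhd G v, f u) : d + 1 ≤ 2 * h := by
  have : #{u ∈ closedNbhd G v | f u = 1} ≤ h :=
    cfg.2.2 ▸ card_le_card (filter_subset_filter _ (subset_univ _))
  rw [cfg.sum_closedNbhd_eq] at hv
  omega

lemma sum_sum_closedNbhd_eq (cfg : IsConfig d h G f) :
    ∑ v, ∑ u ∈ closedNbhd G v, f u = d * (2 * h - n) := by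
  rw [sum_sum_closedNbhd cfg.1, sum_eq_two_mul_card_filter_sub_card _ fun u _ => cfg.2.1 u,
    cfg.2.2]
  simp

lemma add_one_mul_numProponents_le (cfg : IsConfig d h G f) :
    (d + 1) * numProponents G f ≤ 2 * d * h := by
  have hlow := add_one_mul_card_filter_sub_mul_card_le_sum univ
    (fun v => ∑ u ∈ closedNbhd G v, f u) (d := d) fun v _ => by
      rw [cfg.sum_closedNbhd_eq]
      omega
  rw [cfg.sum_sum_closedNbhd_eq] at hlow
  simp only [card_univ, Fintype.card_fin] at hlow
  zify
  rw [numProponents]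
  linarith

theorem support_bounds (cfg : IsConfig d h G f) (app : IsApproving G f) :
    2 * h ≥ d + 1 ∧ 4 * d * h ≥ (n + 1) * (d + 1) := by
  obtain ⟨v, hv⟩ : (univ.filter fun v => 1 ≤ ∑ u ∈ closedNbhd G v, f u).Nonempty :=
    card_pos.1 (by unfold IsApproving numProponents at app; omega)
  refine ⟨cfg.add_one_le_two_mul_of_proponent (mem_filter.1 hv).2, ?_⟩
  have := cfg.add_one_mul_numProponents_le
  unfold IsApproving at app
  nlinarith

end IsConfig

section Hmin

variable {n d : ℕ}

lemma exists_approving_config (hd : Odd d) (hdn : d ≤ n) :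
    ∃ (G : SimpleGraph (Fin n)) (f : Fin n → ℤ), IsConfig d n G f ∧ IsApproving G f := by
  obtain ⟨G, hG⟩ := exists_forall_card_closedNbhd_eq hd hdn
  refine ⟨G, fun _ => 1, ⟨hG, fun _ => .inl rfl, by simp⟩, ?_⟩
  have : numProponents G (fun _ => 1) = n := by
    simp [numProponents, hG, show 1 ≤ d from hd.pos]
  unfold IsApproving
  have := hd.pos
  omega

lemma exists_approving_config_hmin (hd : Odd d) (hdn : d ≤ n) :
    ∃ (G : SimpleGraph (Fin n)) (f : Fin n → ℤ), IsConfig d (hmin n d) G f ∧ IsApproving G f :=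
  Nat.sInf_mem (s := {h | ∃ (G : SimpleGraph (Fin n)) (f : Fin n → ℤ),
    IsConfig d h G f ∧ IsApproving G f}) ⟨n, exists_approving_config hd hdn⟩

end Hmin

theorem stmt2_general (n d : ℕ) (hd : Odd d) (hdn : d ≤ n) :
    ((hmin n d : ℚ) ≥ ((d : ℚ) + 1) / 2 * max (((n : ℚ) + 1) / (2 * (d : ℚ))) 1) ∧
    (∀ (h : ℕ) (G : SimpleGraph (Fin n)) (f : Fin n → ℤ),
      IsConfig d h G f → IsApproving G f →
      2 * h ≥ d + 1 ∧ 4 * d * h ≥ (n + 1) * (d + 1)) := by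
  refine ⟨?_, fun h G f cfg app => cfg.support_bounds app⟩
  obtain ⟨G, f, cfg, app⟩ := exists_approving_config_hmin hd hdn
  obtain ⟨hloc, hglob⟩ := cfg.support_bounds app
  have hloc' : (d : ℚ) + 1 ≤ 2 * hmin n d := by exact_mod_cast hloc
  have hglob' : ((n : ℚ) + 1) * (d + 1) ≤ 4 * d * hmin n d := by exact_mod_cast hglob
  have hd₀ : (0 : ℚ) < d := by exact_mod_cast hd.pos
  rw [ge_iff_le, mul_max_of_nonneg _ _ (by positivity), max_le_iff, div_mul_div_comm,
    div_le_iff₀ (by positivity), mul_one, div_le_iff₀ two_pos]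
  constructor <;> linarith

/-- `hmin(n,d) ≥ ((d+1)/2)·max{(n+1)/(2d), 1}`, i.e. every approving
configuration satisfies both the local and the global support inequalities. -/
theorem stmt2 (n d : ℕ) (hn : Odd n) (hd : Odd d) (hnpos : 0 < n) (hdpos : 0 < d)
    (hdn : d ≤ n) :
    ((hmin n d : ℚ) ≥ ((d : ℚ) + 1) / 2 * max (((n : ℚ) + 1) / (2 * (d : ℚ))) 1) ∧
    (∀ (h : ℕ) (G : SimpleGraph (Fin n)) (f : Fin n → ℤ),
      IsConfig d h G f → IsApproving G f →
      2 * h ≥ d + 1 ∧ 4 * d * h ≥ (n + 1) * (d + 1)) :=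
  stmt2_general n d hd hdn
end

section
/- Let h and t be integers with h ≥ 4 and h - 3 < 2t ≤ 2(h - 3). Then there exists an approving configuration with parameters (n, d, h) where n = 2h + 2t + 1 and d = 2h - 1. -/
open Finset
open scoped Classical

/-!
Let `G` be the complement of the disjoint union of two `(2t+2)`-regular circulant graphs, on
blocks of `h + t` and `h + t + 1` vertices, and put the `h` happy vertices in the first block.
Every closed neighbourhood of `G` then has `2h - 1` vertices, and that of a vertex of the second
block contains all happy vertices, so its vote is `h - (h - 1) = 1`. Thus the `h + t + 1`
vertices of the second block are proponents, a strict majority.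
-/

open SimpleGraph

section Opinion

variable {α : Type*} [DecidableEq α]

def opinionOf (S : Finset α) (v : α) : ℤ := if v ∈ S then 1 else -1

theorem sum_opinionOf (N S : Finset α) :
    ∑ u ∈ N, opinionOf S u = 2 * #(N ∩ S) - #N := by
  have hsplit := card_filter_add_card_filter_not (s := N) (p := (· ∈ S))
  rw [filter_mem_eq_inter] at hsplit
  simp only [opinionOf, sum_ite, sum_const, filter_mem_eq_inter, nsmul_eq_mul, mul_one,
    mul_neg]
  omega

end Opinion

theorem isConfig_opinionOf {n d : ℕ} (G : SimpleGraph (Fin n))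
    (hG : ∀ v, #(closedNbhd G v) = d) (S : Finset (Fin n)) :
    IsConfig d #S G (opinionOf S) := by
  refine ⟨hG, fun v => ?_, ?_⟩
  · unfold opinionOf; split_ifs <;> simp
  · congr 1; ext v; by_cases hv : v ∈ S <;> simp [opinionOf, hv]

theorem isApproving_opinionOf {n d : ℕ} (G : SimpleGraph (Fin n))
    (hG : ∀ v, #(closedNbhd G v) = d) (S B : Finset (Fin n))
    (hSB : ∀ v ∈ B, S ⊆ closedNbhd G v) (hd : d < 2 * #S) (hB : n < 2 * #B) :
    IsApproving G (opinionOf S) := by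
  have hprop : B ⊆ univ.filter fun v => 1 ≤ ∑ u ∈ closedNbhd G v, opinionOf S u := by
    intro v hv
    rw [mem_filter, sum_opinionOf, inter_eq_right.mpr (hSB v hv), hG]
    exact ⟨mem_univ v, by omega⟩
  have := card_le_card hprop
  unfold IsApproving numProponents
  omega

theorem closedNbhd_compl {n : ℕ} (H : SimpleGraph (Fin n)) (v : Fin n) :
    closedNbhd Hᶜ v = (H.neighborFinset v)ᶜ := by
  ext u
  by_cases huv : u = v
  · simp [closedNbhd, huv]
  · simp [closedNbhd, huv, Ne.symm huv]

theorem card_closedNbhd_compl {n : ℕ} (H : SimpleGraph (Fin n)) [H.LocallyFinite] (v : Fin n) :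
    #(closedNbhd Hᶜ v) = n - H.degree v := by
  rw [closedNbhd_compl, card_compl, Fintype.card_fin, ← card_neighborFinset_eq_degree]
  convert rfl

namespace SimpleGraph

theorem IsRegularOfDegree.comap_equiv {V W : Type*} {H : SimpleGraph W} (e : V ≃ W)
    [H.LocallyFinite] [(H.comap e).LocallyFinite] {k : ℕ} (hH : H.IsRegularOfDegree k) :
    (H.comap e).IsRegularOfDegree k := fun v => by
  rw [← hH (e v), ← card_neighborSet_eq_degree, ← card_neighborSet_eq_degree]
  exact Fintype.card_congr ((Iso.comap e H).mapNeighborSet v)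

theorem IsRegularOfDegree.sum {V W : Type*} {G : SimpleGraph V} {H : SimpleGraph W}
    [G.LocallyFinite] [H.LocallyFinite] [(G ⊕g H).LocallyFinite] {k : ℕ}
    (hG : G.IsRegularOfDegree k) (hH : H.IsRegularOfDegree k) :
    (G ⊕g H).IsRegularOfDegree k := by
  rintro (v | w) <;> rw [← card_neighborFinset_eq_degree]
  · have : (G ⊕g H).neighborFinset (.inl v) = (G.neighborFinset v).map .inl := by
      ext (u | u) <;> simp
    rw [this, card_map, card_neighborFinset_eq_degree, hG]
  · have : (G ⊕g H).neighborFinset (.inr w) = (H.neighborFinset w).map .inr := by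
      ext (u | u) <;> simp
    rw [this, card_map, card_neighborFinset_eq_degree, hH]

theorem circulantGraph_isRegularOfDegree {G : Type*} [AddGroup G] [Fintype G] [DecidableEq G]
    {s : Finset G} [(circulantGraph (s : Set G)).LocallyFinite]
    (hs : (0 : G) ∉ s) (hneg : ∀ x ∈ s, -x ∈ s) :
    (circulantGraph (s : Set G)).IsRegularOfDegree #s := fun v => by
  have : (circulantGraph (s : Set G)).neighborFinset v = s.map (addRightEmbedding v) := by
    ext u
    simp only [mem_neighborFinset, circulantGraph_adj, mem_coe, mem_map, addRightEmbedding_apply]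
    constructor
    · rintro ⟨-, h | h⟩
      · exact ⟨-(v - u), hneg _ h, by simp⟩
      · exact ⟨u - v, h, by simp⟩
    · rintro ⟨x, hx, rfl⟩
      refine ⟨fun h => hs ?_, Or.inr (by simpa using hx)⟩
      simpa [(by simpa using h.symm : x = 0)] using hx
  rw [← card_neighborFinset_eq_degree, this, card_map]

end SimpleGraph

theorem ZMod.exists_isRegularOfDegree_two_mul {m r : ℕ} [NeZero m] (hr : 2 * r < m) :
    ∃ H : SimpleGraph (ZMod m), H.IsRegularOfDegree (2 * r) := by
  have hinj : Set.InjOn (Int.cast : ℤ → ZMod m) (Icc (-r : ℤ) r) := by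
    intro a ha b hb hab
    rw [mem_coe, mem_Icc] at ha hb
    rw [ZMod.intCast_eq_intCast_iff_dvd_sub] at hab
    have := Int.eq_zero_of_abs_lt_dvd hab (by rw [abs_lt]; omega)
    omega
  set jumps : Finset (ZMod m) := ((Icc (-r : ℤ) r).erase 0).image Int.cast
  have hcard : #jumps = 2 * r := by
    rw [card_image_of_injOn (hinj.mono (erase_subset _ _)), card_erase_of_mem (by simp),
      Int.card_Icc]
    omega
  have hzero : (0 : ZMod m) ∉ jumps := by
    intro h0
    obtain ⟨a, ha, h0⟩ := mem_image.mp h0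
    exact (mem_erase.mp ha).1 (hinj (erase_subset _ _ ha) (by simp) (by simpa using h0))
  have hneg : ∀ x ∈ jumps, -x ∈ jumps := by
    intro x hx
    obtain ⟨a, ha, rfl⟩ := mem_image.mp hx
    refine mem_image.mpr ⟨-a, ?_, by simp⟩
    simp only [mem_erase, mem_Icc] at ha ⊢
    omega
  refine ⟨circulantGraph (jumps : Set (ZMod m)), hcard ▸ ?_⟩
  convert circulantGraph_isRegularOfDegree hzero hneg

theorem exists_isConfig_isApproving_of_sum {α β : Type*} [Fintype α] [Fintype β] {n k : ℕ}
    (H₁ : SimpleGraph α) (H₂ : SimpleGraph β) (h₁ : H₁.IsRegularOfDegree k)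
    (h₂ : H₂.IsRegularOfDegree k) (S : Finset α) (hn : Fintype.card α + Fintype.card β = n)
    (hS : n - k < 2 * #S) (hαβ : Fintype.card α < Fintype.card β) :
    ∃ (G : SimpleGraph (Fin n)) (f : Fin n → ℤ), IsConfig (n - k) #S G f ∧ IsApproving G f := by
  let e : Fin n ≃ α ⊕ β := (Fintype.equivFinOfCardEq (by rw [Fintype.card_sum, hn])).symm
  let H := (H₁ ⊕g H₂).comap e
  have hH : H.IsRegularOfDegree k := (h₁.sum h₂).comap_equiv e
  have hcl : ∀ v, #(closedNbhd Hᶜ v) = n - k := fun v => by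
    rw [card_closedNbhd_compl, hH v]
  let S' := S.map (Function.Embedding.inl.trans e.symm.toEmbedding)
  let B := (univ : Finset β).map (Function.Embedding.inr.trans e.symm.toEmbedding)
  refine ⟨Hᶜ, opinionOf S', ?_, ?_⟩
  · simpa [S'] using isConfig_opinionOf Hᶜ hcl S'
  · refine isApproving_opinionOf Hᶜ hcl S' B ?_ ?_ ?_
    · intro v hv u hu
      obtain ⟨b, -, rfl⟩ := mem_map.mp hv
      obtain ⟨a, -, rfl⟩ := mem_map.mp hu
      simp [closedNbhd_compl, H]
    · simp only [S', card_map]; omega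
    · simp only [B, card_map, card_univ]; omega

theorem stmt5_general (h t : ℕ) (ht2 : t + 3 ≤ h) :
    ∃ (G : SimpleGraph (Fin (2 * h + 2 * t + 1))) (f : Fin (2 * h + 2 * t + 1) → ℤ),
      IsConfig (2 * h - 1) h G f ∧ IsApproving G f := by
  have : NeZero (h + t) := ⟨by omega⟩
  obtain ⟨H₁, h₁⟩ := ZMod.exists_isRegularOfDegree_two_mul (m := h + t) (r := t + 1) (by omega)
  obtain ⟨H₂, h₂⟩ := ZMod.exists_isRegularOfDegree_two_mul (m := h + t + 1) (r := t + 1) (by omega)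
  obtain ⟨S, -, hS⟩ := exists_subset_card_eq (s := (univ : Finset (ZMod (h + t)))) (n := h)
    (by simp)
  have := exists_isConfig_isApproving_of_sum H₁ H₂ h₁ h₂ S (n := 2 * h + 2 * t + 1)
    (by simp only [ZMod.card]; ring) (by omega) (by simp only [ZMod.card]; omega)
  rwa [hS, show 2 * h + 2 * t + 1 - 2 * (t + 1) = 2 * h - 1 by omega] at this

/-- for `h ≥ 4` and `h - 3 < 2t ≤ 2(h - 3)` there is an approving
configuration with `n = 2h + 2t + 1` and `d = 2h - 1`. -/
theorem stmt5 (h t : ℕ) (h4 : 4 ≤ h) (ht1 : h < 2 * t + 3) (ht2 : t + 3 ≤ h) :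
    ∃ (G : SimpleGraph (Fin (2 * h + 2 * t + 1))) (f : Fin (2 * h + 2 * t + 1) → ℤ),
      IsConfig (2 * h - 1) h G f ∧ IsApproving G f :=
  stmt5_general h t ht2
end

section
/- Every configuration with parameters (n, d, h) = (5, 3, 2) is disapproving, and every configuration with parameters (n, d, h) = (9, 5, 3) is disapproving. That is, for every 2-regular simple graph on 5 vertices and every opinion function with exactly 2 happy vertices, at most 2 vertices are proponents, and for every 4-regular simple graph on 9 vertices and every opinion function with exactly 3 happy vertices, at most 4 vertices are proponents. -/
open Finset
open scoped Classical

lemma mem_cn {n : ℕ} (G : SimpleGraph (Fin n)) {u v : Fin n} :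
    u ∈ closedNbhd G v ↔ u = v ∨ G.Adj v u := by
  simp [closedNbhd]

lemma cn_symm {n : ℕ} (G : SimpleGraph (Fin n)) {u v : Fin n} :
    u ∈ closedNbhd G v ↔ v ∈ closedNbhd G u := by
  rw [mem_cn, mem_cn, eq_comm, G.adj_comm]

lemma self_mem_cn {n : ℕ} (G : SimpleGraph (Fin n)) (v : Fin n) : v ∈ closedNbhd G v := by
  simp [closedNbhd]

lemma sum_card_inter {n : ℕ} (G : SimpleGraph (Fin n)) (A B : Finset (Fin n)) :
    ∑ x ∈ A, (closedNbhd G x ∩ B).card = ∑ y ∈ B, (closedNbhd G y ∩ A).card := by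
  have key : ∀ (A B : Finset (Fin n)), ∑ x ∈ A, (closedNbhd G x ∩ B).card
      = ∑ x ∈ A, ∑ y ∈ B, if y ∈ closedNbhd G x then 1 else 0 := by
    intro A B
    refine Finset.sum_congr rfl fun x _ => ?_
    rw [Finset.inter_comm, ← Finset.filter_mem_eq_inter, Finset.card_filter]
  rw [key, key, Finset.sum_comm]
  refine Finset.sum_congr rfl fun y _ => Finset.sum_congr rfl fun x _ => ?_
  simp only [cn_symm G (u:=y) (v:=x)]

lemma sum_force {α : Type*} {A : Finset α} {c : α → ℕ} {m : ℕ}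
    (h1 : ∀ v ∈ A, m ≤ c v) (h2 : ∑ v ∈ A, c v ≤ m * A.card) : ∀ v ∈ A, c v = m := by
  intro v hv
  have e : c v + ∑ u ∈ A.erase v, c u = ∑ u ∈ A, c u := Finset.add_sum_erase A c hv
  have hlb : m * (A.erase v).card ≤ ∑ u ∈ A.erase v, c u := by
    have := Finset.card_nsmul_le_sum (A.erase v) c m
      (fun u hu => h1 u (Finset.mem_of_mem_erase hu))
    simpa [mul_comm] using this
  have hcard : A.card = (A.erase v).card + 1 := by
    have h1' : 1 ≤ A.card := Finset.card_pos.2 ⟨v, hv⟩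
    rw [Finset.card_erase_of_mem hv]
    omega
  rw [hcard, Nat.mul_add, Nat.mul_one] at h2
  have := h1 v hv
  have : c v ≤ m := by linarith
  exact le_antisymm this (h1 v hv)

lemma main_lemma {n d h : ℕ} (G : SimpleGraph (Fin n)) (f : Fin n → ℤ)
    (hreg : ∀ v, (closedNbhd G v).card = d) (hf : ∀ v, f v = 1 ∨ f v = -1)
    (hH : (Finset.univ.filter fun v => f v = 1).card = h)
    (hn : n + 1 = 2 * d) (hh2 : 2 * h = d + 1)
    (hlt : (d - h) * (d - h - 1) + d < n) :
    (Finset.univ.filter fun v : Fin n => 1 ≤ ∑ u ∈ closedNbhd G v, f u).card ≤ d - 1 := by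
  classical
  set H : Finset (Fin n) := Finset.univ.filter (fun v => f v = 1) with hHdef
  set P : Finset (Fin n) := Finset.univ.filter
    (fun v => 1 ≤ ∑ u ∈ closedNbhd G v, f u) with hPdef
  by_contra hcon
  push_neg at hcon
  have hh1 : 1 ≤ h := by omega
  have hd1 : 1 ≤ d := by omega
  have hPcard : d ≤ P.card := by omega
  -- each proponent sees at least h happy vertices
  have hpge : ∀ v ∈ P, h ≤ (closedNbhd G v ∩ H).card := by
    intro v hv
    have hv1 : 1 ≤ ∑ u ∈ closedNbhd G v, f u := (Finset.mem_filter.1 hv).2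
    have e1 : ∑ u ∈ closedNbhd G v, f u
        = ∑ u ∈ closedNbhd G v, (2 * (if f u = 1 then (1:ℤ) else 0) - 1) := by
      refine Finset.sum_congr rfl fun u _ => ?_
      rcases hf u with h' | h' <;> simp [h']
    have e2 : closedNbhd G v ∩ H = (closedNbhd G v).filter fun u => f u = 1 := by
      rw [hHdef]
      ext u
      simp [Finset.mem_inter, Finset.mem_filter]
    rw [e1, Finset.sum_sub_distrib, ← Finset.mul_sum, Finset.sum_boole, Finset.sum_const,
      nsmul_eq_mul, mul_one, hreg v] at hv1
    have hc : ((closedNbhd G v).filter fun u => f u = 1).card = (closedNbhd G v ∩ H).card := by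
      rw [e2]
    rw [hc] at hv1
    have : (d : ℤ) + 1 ≤ 2 * ((closedNbhd G v ∩ H).card : ℤ) := by linarith
    have : d + 1 ≤ 2 * (closedNbhd G v ∩ H).card := by exact_mod_cast this
    omega
  -- total count
  have htot : ∑ v : Fin n, (closedNbhd G v ∩ H).card = h * d := by
    rw [sum_card_inter G Finset.univ H]
    calc ∑ y ∈ H, (closedNbhd G y ∩ Finset.univ).card = ∑ y ∈ H, d := by
          refine Finset.sum_congr rfl fun y _ => ?_
          rw [Finset.inter_univ, hreg]
      _ = h * d := by rw [Finset.sum_const, smul_eq_mul, hH]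
  have hsumP : h * P.card ≤ ∑ v ∈ P, (closedNbhd G v ∩ H).card := by
    have := Finset.card_nsmul_le_sum P (fun v => (closedNbhd G v ∩ H).card) h hpge
    simpa [mul_comm] using this
  have hPsub : ∑ v ∈ P, (closedNbhd G v ∩ H).card ≤ h * d := by
    rw [← htot]
    exact Finset.sum_le_sum_of_subset (Finset.subset_univ P)
  have hPd : P.card = d :=
    le_antisymm (Nat.le_of_mul_le_mul_left (hsumP.trans hPsub) hh1) hPcard
  have hforce : ∀ v ∈ P, (closedNbhd G v ∩ H).card = h :=
    sum_force hpge (by rw [hPd]; exact hPsub)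
  have hzero : ∀ v, v ∉ P → (closedNbhd G v ∩ H).card = 0 := by
    have hPsum : ∑ v ∈ P, (closedNbhd G v ∩ H).card = h * d := by
      rw [Finset.sum_congr rfl hforce, Finset.sum_const, smul_eq_mul, hPd, mul_comm]
    have hsplit : ∑ v ∈ Finset.univ \ P, (closedNbhd G v ∩ H).card
        + ∑ v ∈ P, (closedNbhd G v ∩ H).card = ∑ v : Fin n, (closedNbhd G v ∩ H).card :=
      Finset.sum_sdiff (Finset.subset_univ P)
    have hz : ∑ v ∈ Finset.univ \ P, (closedNbhd G v ∩ H).card = 0 := by omega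
    intro v hv
    exact (Finset.sum_eq_zero_iff.1 hz) v (Finset.mem_sdiff.2 ⟨Finset.mem_univ v, hv⟩)
  have hHP : H ⊆ P := by
    intro u hu
    by_contra hup
    have h0 := hzero u hup
    have hmem : u ∈ closedNbhd G u ∩ H := Finset.mem_inter.2 ⟨self_mem_cn G u, hu⟩
    have := Finset.card_pos.2 ⟨u, hmem⟩
    omega
  have hHsubN : ∀ w ∈ P, H ⊆ closedNbhd G w := by
    intro w hw
    have heq : closedNbhd G w ∩ H = H :=
      Finset.eq_of_subset_of_card_le Finset.inter_subset_right
        (by rw [hforce w hw, hH])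
    intro u hu
    rw [← heq] at hu
    exact (Finset.mem_inter.1 hu).1
  have hNu : ∀ u ∈ H, closedNbhd G u = P := by
    intro u hu
    have hsub : P ⊆ closedNbhd G u := by
      intro w hw
      exact (cn_symm G).1 (hHsubN w hw hu)
    exact (Finset.eq_of_subset_of_card_le hsub (by rw [hreg u, hPd])).symm
  set Q : Finset (Fin n) := Finset.univ \ P with hQdef
  set W : Finset (Fin n) := P \ H with hWdef
  have hQcard : Q.card = n - d := by
    rw [hQdef, Finset.card_sdiff_of_subset (Finset.subset_univ P), Finset.card_univ,
      Fintype.card_fin, hPd]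
  have hWcard : W.card = d - h := by
    rw [hWdef, Finset.card_sdiff_of_subset hHP, hPd, hH]
  have hQH : ∀ x ∈ Q, ∀ y ∈ closedNbhd G x, y ∉ H := by
    intro x hx y hy hyH
    have hx' : x ∈ closedNbhd G y := (cn_symm G).1 hy
    rw [hNu y hyH] at hx'
    exact (Finset.mem_sdiff.1 hx).2 hx'
  have hxW : ∀ x ∈ Q, 1 ≤ (closedNbhd G x ∩ W).card := by
    intro x hx
    have hsub : closedNbhd G x ⊆ (closedNbhd G x ∩ W) ∪ Q := by
      intro y hy
      by_cases hyP : y ∈ P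
      · exact Finset.mem_union_left _
          (Finset.mem_inter.2 ⟨hy, Finset.mem_sdiff.2 ⟨hyP, hQH x hx y hy⟩⟩)
      · exact Finset.mem_union_right _ (Finset.mem_sdiff.2 ⟨Finset.mem_univ y, hyP⟩)
    have hle := (Finset.card_le_card hsub).trans (Finset.card_union_le _ _)
    rw [hreg x, hQcard] at hle
    omega
  have hwQ : ∀ w ∈ W, (closedNbhd G w ∩ Q).card ≤ d - h - 1 := by
    intro w hw
    have hwP : w ∈ P := (Finset.mem_sdiff.1 hw).1
    have hwH : w ∉ H := (Finset.mem_sdiff.1 hw).2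
    have hsub : (closedNbhd G w ∩ Q) ∪ insert w H ⊆ closedNbhd G w := by
      intro y hy
      rcases Finset.mem_union.1 hy with hy | hy
      · exact (Finset.mem_inter.1 hy).1
      · rcases Finset.mem_insert.1 hy with rfl | hy
        · exact self_mem_cn G y
        · exact hHsubN w hwP hy
    have hdisj : Disjoint (closedNbhd G w ∩ Q) (insert w H) := by
      rw [Finset.disjoint_left]
      intro y hy hy2
      have hyQ : y ∉ P := (Finset.mem_sdiff.1 (Finset.mem_inter.1 hy).2).2
      rcases Finset.mem_insert.1 hy2 with rfl | hyH
      · exact hyQ hwP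
      · exact hyQ (hHP hyH)
    have hle := Finset.card_le_card hsub
    rw [Finset.card_union_of_disjoint hdisj, Finset.card_insert_of_notMem hwH,
      hH, hreg w] at hle
    omega
  have hS := sum_card_inter G Q W
  have hlow : Q.card ≤ ∑ x ∈ Q, (closedNbhd G x ∩ W).card := by
    calc Q.card = ∑ _x ∈ Q, 1 := by simp
      _ ≤ _ := Finset.sum_le_sum hxW
  have hup : ∑ w ∈ W, (closedNbhd G w ∩ Q).card ≤ W.card * (d - h - 1) := by
    calc ∑ w ∈ W, (closedNbhd G w ∩ Q).card ≤ ∑ _w ∈ W, (d - h - 1) :=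
          Finset.sum_le_sum hwQ
      _ = W.card * (d - h - 1) := by rw [Finset.sum_const, smul_eq_mul]
  rw [hWcard] at hup
  rw [hQcard] at hlow
  have hfin : n - d ≤ (d - h) * (d - h - 1) := by
    calc n - d ≤ ∑ x ∈ Q, (closedNbhd G x ∩ W).card := hlow
      _ = ∑ w ∈ W, (closedNbhd G w ∩ Q).card := hS
      _ ≤ (d - h) * (d - h - 1) := hup
  set m := (d - h) * (d - h - 1) with hm
  omega

/-- every configuration with parameters `(5,3,2)` has at most `2`
proponents (hence is disapproving), and every configuration with parameters `(9,5,3)`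
has at most `4` proponents (hence is disapproving). -/
theorem stmt6 :
    (∀ (G : SimpleGraph (Fin 5)) (f : Fin 5 → ℤ),
      IsConfig 3 2 G f → numProponents G f ≤ 2) ∧
    (∀ (G : SimpleGraph (Fin 9)) (f : Fin 9 → ℤ),
      IsConfig 5 3 G f → numProponents G f ≤ 4) := by
  constructor
  · intro G f hc
    exact main_lemma G f hc.1 hc.2.1 hc.2.2 rfl rfl (by norm_num)
  · intro G f hc
    exact main_lemma G f hc.1 hc.2.1 hc.2.2 rfl rfl (by norm_num)
end

section
/- There exists an approving configuration with parameters (n, d, h) = (5, 3, 3), and there exists an approving configuration with parameters (n, d, h) = (9, 5, 4). -/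
open Finset
open scoped Classical

def myG5 : SimpleGraph (Fin 5) :=
  SimpleGraph.fromRel (fun a b => (a.val + 1) % 5 = b.val)

instance : DecidableRel myG5.Adj := fun a b =>
  inferInstanceAs (Decidable (a ≠ b ∧ ((a.val + 1) % 5 = b.val ∨ (b.val + 1) % 5 = a.val)))

def myE9 : List (ℕ × ℕ) :=
  [(0,1),(1,2),(2,3),(0,3),(0,4),(1,4),(2,4),(4,8),(0,5),(1,5),(2,6),(3,6),(3,7),
   (5,7),(5,8),(6,7),(6,8),(7,8)]

def myG9 : SimpleGraph (Fin 9) :=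
  SimpleGraph.fromRel (fun a b => (a.val, b.val) ∈ myE9)

instance : DecidableRel myG9.Adj := fun a b =>
  inferInstanceAs (Decidable (a ≠ b ∧ ((a.val, b.val) ∈ myE9 ∨ (b.val, a.val) ∈ myE9)))

/-- there exist approving configurations with parameters `(5,3,3)` and
`(9,5,4)`. -/
theorem stmt8 :
    (∃ (G : SimpleGraph (Fin 5)) (f : Fin 5 → ℤ), IsConfig 3 3 G f ∧ IsApproving G f) ∧
    (∃ (G : SimpleGraph (Fin 9)) (f : Fin 9 → ℤ), IsConfig 5 4 G f ∧ IsApproving G f) := by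
  have h5 : ∀ v, closedNbhd myG5 v = Finset.univ.filter (fun u => u = v ∨ myG5.Adj v u) :=
    fun v => Finset.filter_congr_decidable _ _ _
  have h9 : ∀ v, closedNbhd myG9 v = Finset.univ.filter (fun u => u = v ∨ myG9.Adj v u) :=
    fun v => Finset.filter_congr_decidable _ _ _
  constructor
  · refine ⟨myG5, fun v => if v.val < 3 then 1 else -1, ⟨?_, ?_, ?_⟩, ?_⟩
    · intro v; rw [h5]; revert v; decide
    · intro v; dsimp only; split <;> simp
    · decide
    · show 2 * (Finset.univ.filter fun v =>
        1 ≤ ∑ u ∈ closedNbhd myG5 v, _).card > 5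
      simp only [h5]; decide
  · refine ⟨myG9, fun v => if v.val < 4 then 1 else -1, ⟨?_, ?_, ?_⟩, ?_⟩
    · intro v; rw [h9]; revert v; decide
    · intro v; dsimp only; split <;> simp
    · decide
    · show 2 * (Finset.univ.filter fun v =>
        1 ≤ ∑ u ∈ closedNbhd myG9 v, _).card > 9
      simp only [h9]; decide
end

section
/- Let n and d be odd positive integers with d < (n+1)/2, and let h ≤ n be a nonnegative integer satisfying the global support inequality 4dh ≥ (n+1)(d+1). Then there exists an approving configuration with parameters (n, d, h). -/
open Finset
open scoped Classical

/-!
Split the vertices into two circulant graphs `C(m; 1, …, r)` and `C(m - 1; 1, …, r)` with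
`m = (n + 1) / 2` and `d = 2r + 1`, so that every closed neighbourhood is an arc of `d`
consecutive residues. On the larger cycle, make happy the `q = min h m` positions `x` at which
`⌊x q / m⌋` jumps (a Christoffel word of slope `q / m`): the number of happy positions in
any `d` consecutive ones telescopes to a difference of floors, hence is at least `⌊d q / m⌋`,
and the global support inequality gives `⌊d q / m⌋ ≥ r + 1`. So all `m > n / 2` vertices of the
larger cycle are proponents; the remaining `h - q` happy vertices go on the smaller cycle.
-/

namespace SimpleGraph

variable {V : Type*} [Fintype V]

noncomputable def closedNeighborFinset (G : SimpleGraph V) (v : V) : Finset V :=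
  univ.filter fun u => u = v ∨ G.Adj v u

end SimpleGraph

open SimpleGraph

lemma closedNbhd_comap {V : Type*} [Fintype V] {n : ℕ} (e : Fin n ≃ V) (G : SimpleGraph V)
    (v : Fin n) :
    closedNbhd (G.comap e) v = (G.closedNeighborFinset (e v)).map e.symm.toEmbedding := by
  ext u
  simp [closedNbhd, closedNeighborFinset]

lemma Finset.sum_ite_mem_one_neg_one {V : Type*} [DecidableEq V] (s t : Finset V) :
    ∑ x ∈ s, (if x ∈ t then (1 : ℤ) else -1) = 2 * #(s ∩ t) - #s := by
  rw [sum_ite, sum_const, sum_const, filter_mem_eq_inter,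
    ← card_filter_add_card_filter_not (· ∈ t) (s := s), filter_mem_eq_inter]
  simp only [nsmul_eq_mul, mul_one, mul_neg, Nat.cast_add]
  ring

theorem exists_approving_config_of_equiv {V : Type*} [Fintype V] [DecidableEq V] {n d h : ℕ}
    (e : Fin n ≃ V) (H : SimpleGraph V) (S A : Finset V)
    (hdeg : ∀ x, #(H.closedNeighborFinset x) = d) (hS : #S = h)
    (hA : ∀ x ∈ A, d < 2 * #(H.closedNeighborFinset x ∩ S)) (hAn : n < 2 * #A) :
    ∃ (G : SimpleGraph (Fin n)) (f : Fin n → ℤ), IsConfig d h G f ∧ IsApproving G f := by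
  set f : Fin n → ℤ := fun v => if e v ∈ S then 1 else -1 with hf
  refine ⟨H.comap e, f, ⟨fun v => ?_, fun v => ?_, ?_⟩, ?_⟩
  · rw [closedNbhd_comap, card_map, hdeg]
  · by_cases hv : e v ∈ S <;> simp [hf, hv]
  · have : (univ.filter fun v => f v = 1) = S.map e.symm.toEmbedding := by
      ext v
      by_cases hv : e v ∈ S <;> simp [hf, hv]
    rw [this, card_map, hS]
  · have hsub : A.map e.symm.toEmbedding ⊆
        univ.filter fun v => 1 ≤ ∑ u ∈ closedNbhd (H.comap e) v, f u := by
      intro v hv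
      obtain ⟨x, hx, rfl⟩ := mem_map.mp hv
      have := hA x hx
      simp only [mem_filter, mem_univ, true_and, closedNbhd_comap, sum_map, hf,
        Equiv.coe_toEmbedding, Equiv.apply_symm_apply, sum_ite_mem_one_neg_one, hdeg]
      omega
    have := card_le_card hsub
    rw [card_map] at this
    unfold IsApproving numProponents
    omega

namespace Nat

lemma floor_mul_div_add_card_filter {L q : ℕ} (hq : q ≤ L) (c k : ℕ) :
    c * q / L + #((range k).filter fun i => (c + i) * q / L < (c + i + 1) * q / L) =
      (c + k) * q / L := by
  induction k with
  | zero => simp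
  | succ k ih =>
    have hmono : (c + k) * q / L ≤ (c + k + 1) * q / L :=
      Nat.div_le_div_right (Nat.mul_le_mul_right q (by omega))
    have hstep : (c + k + 1) * q / L ≤ (c + k) * q / L + 1 := by
      rcases L.eq_zero_or_pos with rfl | hL
      · simp
      calc (c + k + 1) * q / L ≤ ((c + k) * q + L) / L := by
            gcongr; rw [add_mul, one_mul]; omega
        _ = (c + k) * q / L + 1 := Nat.add_div_right _ hL
    rw [range_add_one, filter_insert]
    split_ifs <;> simp_all [← add_assoc] <;> omega

lemma mod_mul_div_lt_iff {L : ℕ} (hL : 0 < L) (q x : ℕ) :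
    x % L * q / L < (x % L + 1) * q / L ↔ x * q / L < (x + 1) * q / L := by
  have h1 : x * q = x % L * q + x / L * q * L := by
    conv_lhs => rw [← Nat.mod_add_div' x L]
    ring
  have h2 : (x + 1) * q = (x % L + 1) * q + x / L * q * L := by
    conv_lhs => rw [← Nat.mod_add_div' x L]
    ring
  rw [h1, h2, Nat.add_mul_div_right _ _ hL, Nat.add_mul_div_right _ _ hL]
  omega

end Nat

section Arc

variable {G : Type*} [AddCommGroupWithOne G] [DecidableEq G]

def arc (c : G) (k : ℕ) : Finset G := (range k).image fun i : ℕ => c + (i : G)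

lemma closedNeighborFinset_circulantGraph [Fintype G] (r : ℕ) (v : G) :
    (circulantGraph (((↑) : ℕ → G) '' Set.Iic r)).closedNeighborFinset v =
      arc (v - r) (2 * r + 1) := by
  ext u
  simp only [SimpleGraph.closedNeighborFinset, arc, mem_filter, mem_univ, true_and,
    circulantGraph_adj, Set.mem_image, Set.mem_Iic, mem_image, mem_range]
  constructor
  · rintro (rfl | ⟨-, ⟨k, hk, hvu⟩ | ⟨k, hk, huv⟩⟩)
    · exact ⟨r, by omega, by abel⟩
    · refine ⟨r - k, by omega, ?_⟩
      rw [Nat.cast_sub hk, hvu]; abel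
    · refine ⟨r + k, by omega, ?_⟩
      rw [Nat.cast_add, huv]; abel
  · rintro ⟨i, hi, rfl⟩
    by_cases hu : v - r + i = v
    · exact Or.inl hu
    refine Or.inr ⟨Ne.symm hu, ?_⟩
    rcases Nat.le_total i r with hir | hri
    · exact Or.inl ⟨r - i, by omega, by rw [Nat.cast_sub hir]; abel⟩
    · exact Or.inr ⟨i - r, by omega, by rw [Nat.cast_sub hri]; abel⟩

end Arc

namespace ZMod

lemma injOn_add_natCast {L : ℕ} (c : ZMod L) : Set.InjOn (fun i : ℕ => c + i) (range L) := by
  intro i hi j hj hij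
  simp only [coe_range, Set.mem_Iio, add_right_inj] at hi hj hij
  rwa [natCast_eq_natCast_iff', Nat.mod_eq_of_lt hi, Nat.mod_eq_of_lt hj] at hij

lemma card_arc {L : ℕ} (c : ZMod L) {k : ℕ} (hk : k ≤ L) : #(arc c k) = k := by
  rw [arc, card_image_of_injOn ((injOn_add_natCast c).mono (by simpa using hk)), card_range]

variable {L : ℕ} [NeZero L]

lemma arc_zero_self : arc (0 : ZMod L) L = univ :=
  eq_univ_of_card _ (by rw [card_arc _ le_rfl, card])

def christoffelFinset (L q : ℕ) [NeZero L] : Finset (ZMod L) :=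
  univ.filter fun x => x.val * q / L < (x.val + 1) * q / L

variable {q : ℕ}

lemma val_mul_div_add_card_arc_inter_christoffelFinset (hq : q ≤ L) (c : ZMod L) {k : ℕ}
    (hk : k ≤ L) :
    c.val * q / L + #(arc c k ∩ christoffelFinset L q) = (c.val + k) * q / L := by
  have hfilter : arc c k ∩ christoffelFinset L q =
      ((range k).filter fun i => (c.val + i) * q / L < (c.val + i + 1) * q / L).image
        fun i : ℕ => c + i := by
    rw [arc, christoffelFinset, inter_filter, inter_univ, filter_image]
    congr 1
    refine filter_congr fun i _ => ?_
    rw [val_add, val_natCast, Nat.add_mod_mod,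
      Nat.mod_mul_div_lt_iff (NeZero.pos L)]
  have hsub : ((range k).filter fun i => (c.val + i) * q / L < (c.val + i + 1) * q / L) ⊆
      range L := (filter_subset _ _).trans (range_subset_range.mpr hk)
  rw [hfilter, card_image_of_injOn ((injOn_add_natCast c).mono (coe_subset.mpr hsub)),
    Nat.floor_mul_div_add_card_filter hq]

lemma card_christoffelFinset (hq : q ≤ L) : #(christoffelFinset L q) = q := by
  have := val_mul_div_add_card_arc_inter_christoffelFinset hq 0 le_rfl
  rwa [arc_zero_self, univ_inter, val_zero, zero_mul, Nat.zero_div, zero_add, zero_add,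
    Nat.mul_div_cancel_left _ (NeZero.pos L)] at this

lemma mul_div_le_card_arc_inter_christoffelFinset (hq : q ≤ L) (c : ZMod L) {k : ℕ}
    (hk : k ≤ L) : k * q / L ≤ #(arc c k ∩ christoffelFinset L q) := by
  have := val_mul_div_add_card_arc_inter_christoffelFinset hq c hk
  have : c.val * q / L + k * q / L ≤ (c.val + k) * q / L := by
    rw [add_mul]; exact Nat.div_add_div_le_add_div
  omega

end ZMod

namespace SimpleGraph

variable {V W : Type*} [Fintype V] [Fintype W] (G : SimpleGraph V) (H : SimpleGraph W)

lemma closedNeighborFinset_sum_inl (v : V) :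
    (G ⊕g H).closedNeighborFinset (.inl v) = (G.closedNeighborFinset v).map .inl := by
  ext (u | u) <;> simp [closedNeighborFinset]

lemma closedNeighborFinset_sum_inr (w : W) :
    (G ⊕g H).closedNeighborFinset (.inr w) = (H.closedNeighborFinset w).map .inr := by
  ext (u | u) <;> simp [closedNeighborFinset]

end SimpleGraph

lemma Finset.map_inl_inter_disjSum {α β : Type*} [DecidableEq α] [DecidableEq β]
    (s t : Finset α) (u : Finset β) :
    s.map .inl ∩ t.disjSum u = (s ∩ t).map .inl := by
  ext (x | x) <;> simp

theorem exists_approving_config_two_circulants {n m m' r q e h : ℕ}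
    (hnm : m + m' = n) (hqe : q + e = h) (hm' : 2 * r + 1 ≤ m') (hmm' : m' < m)
    (hq : q ≤ m) (he : e ≤ m') (hmq : m * (r + 1) ≤ (2 * r + 1) * q) :
    ∃ (G : SimpleGraph (Fin n)) (f : Fin n → ℤ),
      IsConfig (2 * r + 1) h G f ∧ IsApproving G f := by
  have hm : 2 * r + 1 ≤ m := by omega
  have : NeZero m := ⟨by omega⟩
  have : NeZero m' := ⟨by omega⟩
  let C : (L : ℕ) → SimpleGraph (ZMod L) := fun L => circulantGraph ((↑) '' Set.Iic r)
  refine exists_approving_config_of_equiv (Fintype.equivOfCardEq (by simp [ZMod.card, hnm]))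
    (C m ⊕g C m') ((ZMod.christoffelFinset m q).disjSum (arc 0 e)) (univ.map .inl)
    ?_ ?_ ?_ (by rw [card_map, card_univ, ZMod.card]; omega)
  · rintro (x | x)
    · rw [closedNeighborFinset_sum_inl, card_map, closedNeighborFinset_circulantGraph,
        ZMod.card_arc _ hm]
    · rw [closedNeighborFinset_sum_inr, card_map, closedNeighborFinset_circulantGraph,
        ZMod.card_arc _ hm']
  · rw [card_disjSum, ZMod.card_christoffelFinset hq, ZMod.card_arc _ he, hqe]
  · simp only [mem_map, mem_univ, true_and, Function.Embedding.inl_apply]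
    rintro _ ⟨x, rfl⟩
    have hr : r + 1 ≤ (2 * r + 1) * q / m := by
      rw [Nat.le_div_iff_mul_le (NeZero.pos m)]; linarith
    have := ZMod.mul_div_le_card_arc_inter_christoffelFinset hq (x - r) hm
    rw [closedNeighborFinset_sum_inl, map_inl_inter_disjSum, card_map,
      closedNeighborFinset_circulantGraph]
    omega

theorem stmt10_general (n d h : ℕ) (hn : Odd n) (hd : Odd d)
    (hlow : 2 * d < n + 1) (hhn : h ≤ n) (hglob : 4 * d * h ≥ (n + 1) * (d + 1)) :
    ∃ (G : SimpleGraph (Fin n)) (f : Fin n → ℤ), IsConfig d h G f ∧ IsApproving G f := by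
  obtain ⟨k, rfl⟩ := hn
  obtain ⟨r, rfl⟩ := hd
  have hmq : (k + 1) * (r + 1) ≤ (2 * r + 1) * min h (k + 1) := by
    rcases le_total h (k + 1) with hh | hh
    · rw [min_eq_left hh]; linarith
    · rw [min_eq_right hh]; nlinarith
  exact exists_approving_config_two_circulants (m := k + 1) (m' := k) (by omega)
    (Nat.add_sub_of_le (min_le_left h (k + 1))) (by omega) (by omega) (min_le_right _ _)
    (by omega) hmq

/-- for low-degree classes (`d < (n+1)/2`), any `h ≤ n` satisfying the
global support inequality `4dh ≥ (n+1)(d+1)` admits an approving configuration. -/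
theorem stmt10 (n d h : ℕ) (hn : Odd n) (hd : Odd d) (hnpos : 0 < n) (hdpos : 0 < d)
    (hlow : 2 * d < n + 1) (hhn : h ≤ n) (hglob : 4 * d * h ≥ (n + 1) * (d + 1)) :
    ∃ (G : SimpleGraph (Fin n)) (f : Fin n → ℤ), IsConfig d h G f ∧ IsApproving G f :=
  stmt10_general n d h hn hd hlow hhn hglob
end
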